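/- In the category of topological spaces, consider a pushout square with legs f : A → B and g : A → C that are both topological embeddings, with pushout object D and cocone maps b : B → D and c : C → D. Then b and c are topological embeddings, D is covered by their images (every point of D lies in b(B) ∪ c(C)), and the images intersect exactly in the image of A, i.e. b(B) ∩ c(C) = b(f(A)) = c(g(A)). -/

import Mathlib

/-!
The forgetful functor to sets preserves pushouts, and in sets a pushout of an injection is
injective, the two images cover, and `b x = c y` exactly when `x = f a` and `y = g a` for some
`a`. For the topology, an open `U ⊆ B` has `f⁻¹ U = g⁻¹ W` for some open `W ⊆ C` because `g` is an
embedding; the indicators of `U` and `W` into Sierpiński space then agree on `A`, so they glue to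
a continuous map on `D`, and the open set it cuts out pulls back to `U` along `b`.
-/

open CategoryTheory CategoryTheory.Limits Topology

universe u

namespace TopCat

variable {A B C D : TopCat.{u}} {f : A ⟶ B} {g : A ⟶ C} {b : B ⟶ D} {c : C ⟶ D}

lemma exists_isOpen_preimage_eq_of_isPushout (hpo : IsPushout f g b c) {U : Set B} {W : Set C}
    (hU : IsOpen U) (hW : IsOpen W) (hUW : f ⁻¹' U = g ⁻¹' W) :
    ∃ V : Set D, IsOpen V ∧ b ⁻¹' V = U := by
  let indicator {X : TopCat.{u}} (s : Set X) (hs : IsOpen s) : X ⟶ of (ULift.{u} Prop) :=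
    ofHom ⟨fun x ↦ ULift.up (x ∈ s),
      continuous_uliftUp.comp (isOpen_iff_continuous_mem.1 hs)⟩
  have hcomm : f ≫ indicator U hU = g ≫ indicator W hW := by
    ext a
    exact Iff.of_eq (congrArg (a ∈ ·) hUW)
  let h := hpo.desc _ _ hcomm
  refine ⟨{d | (h d).down}, isOpen_iff_continuous_mem.2
    (continuous_uliftDown.comp h.hom.continuous), ?_⟩
  ext x
  exact Iff.of_eq (congrArg ULift.down (ConcreteCategory.congr_hom (hpo.inl_desc _ _ hcomm) x))

lemma isInducing_inl_of_isPushout (hpo : IsPushout f g b c) (hg : IsInducing g) :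
    IsInducing b := by
  refine ⟨le_antisymm (continuous_iff_le_induced.1 b.hom.continuous) fun U hU ↦ ?_⟩
  obtain ⟨W, hW, hWU⟩ := hg.isOpen_iff.1 (hU.preimage f.hom.continuous)
  obtain ⟨V, hV, hVU⟩ := exists_isOpen_preimage_eq_of_isPushout hpo hU hW hWU.symm
  exact isOpen_induced_iff.2 ⟨V, hV, hVU⟩

lemma injective_inr_of_isPushout (hpo : IsPushout f g b c) (hf : Function.Injective f) :
    Function.Injective c :=
  Types.pushoutCocone_inr_injective_of_isColimit (hpo.map (forget TopCat)).isColimit hf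

lemma isEmbedding_inl_of_isPushout (hpo : IsPushout f g b c) (hg : IsEmbedding g) :
    IsEmbedding b :=
  ⟨isInducing_inl_of_isPushout hpo hg.isInducing,
    injective_inr_of_isPushout hpo.flip hg.injective⟩

lemma range_inl_union_range_inr_of_isPushout (hpo : IsPushout f g b c) :
    Set.range b ∪ Set.range c = Set.univ :=
  Set.eq_univ_of_forall fun d ↦ Types.eq_or_eq_of_isPushout (hpo.map (forget TopCat)) d

lemma range_inl_inter_range_inr_of_isPushout (hpo : IsPushout f g b c)
    (hf : Function.Injective f) : Set.range b ∩ Set.range c = b '' Set.range f := by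
  ext d
  constructor
  · rintro ⟨⟨x, rfl⟩, ⟨y, hy⟩⟩
    obtain ⟨a, rfl, -⟩ :=
      (Types.pushoutCocone_inl_eq_inr_iff_of_isColimit (hpo.map (forget TopCat)).isColimit hf
        x y).1 hy.symm
    exact ⟨f a, ⟨a, rfl⟩, rfl⟩
  · rintro ⟨_, ⟨a, rfl⟩, rfl⟩
    exact ⟨⟨f a, rfl⟩, ⟨g a, (ConcreteCategory.congr_hom hpo.w a).symm⟩⟩

lemma image_range_eq_of_isPushout (hpo : IsPushout f g b c) :
    b '' Set.range f = c '' Set.range g := by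
  rw [← Set.range_comp, ← Set.range_comp]
  exact congrArg Set.range (funext (ConcreteCategory.congr_hom hpo.w))

end TopCat

/-- In `TopCat`, given a pushout square with legs `f : A ⟶ B` and
`g : A ⟶ C` both topological embeddings, with pushout object `D` and cocone maps
`b : B ⟶ D`, `c : C ⟶ D`, the maps `b` and `c` are topological embeddings, `D` is covered
by their images, and the images intersect exactly in the image of `A`:
`b(B) ∩ c(C) = b(f(A)) = c(g(A))`. -/
theorem stmt2 (A B C D : TopCat) (f : A ⟶ B) (g : A ⟶ C) (b : B ⟶ D) (c : C ⟶ D)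
    (hf : IsEmbedding f) (hg : IsEmbedding g) (hpo : IsPushout f g b c) :
    IsEmbedding b ∧ IsEmbedding c ∧
    Set.range b ∪ Set.range c = Set.univ ∧
    Set.range b ∩ Set.range c = ⇑b '' (Set.range f) ∧
    Set.range b ∩ Set.range c = ⇑c '' (Set.range g) := by
  have hinter := TopCat.range_inl_inter_range_inr_of_isPushout hpo hf.injective
  exact ⟨TopCat.isEmbedding_inl_of_isPushout hpo hg,
    TopCat.isEmbedding_inl_of_isPushout hpo.flip hf,
    TopCat.range_inl_union_range_inr_of_isPushout hpo, hinter,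
    hinter.trans (TopCat.image_range_eq_of_isPushout hpo)⟩
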